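/- arXiv:2404.07093 — 3 statements merged into one kernel-verified Lean document; each statement's English description precedes it below -/
import Mathlib

section
/- A ring R fails to satisfy the rank condition if and only if there is a positive integer n such that every finitely generated right R-module can be generated by n elements. -/
universe u

/-- A ring `R` satisfies the (right) rank condition if for all positive integers
`n < m` there is no surjective homomorphism of right `R`-modules `R^n → R^m`.
Right `R`-modules are treated as left modules over the opposite ring `Rᵐᵒᵖ`. -/
def RightRankCondition (R : Type u) [Ring R] : Prop :=
  ∀ n m : ℕ, 0 < n → n < m →
    ¬ ∃ f : (Fin n → Rᵐᵒᵖ) →ₗ[Rᵐᵒᵖ] (Fin m → Rᵐᵒᵖ), Function.Surjective f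

/-!
If `R^n` surjects onto `R^m` with `n < m`, it surjects onto `R^(n+1) ≅ R × R^n`, and feeding
the second factor back in shows that `R^n` surjects onto every `R^N`, hence onto every finitely
generated module. Conversely, if every finitely generated module is `n`-generated, then so is
`R^(n+1)`, which gives a surjection `R^n → R^(n+1)`.
-/

open Function

section Generators

variable {A M : Type*} [Semiring A] [AddCommMonoid M] [Module A M]

theorem exists_finset_card_le_span_eq_top_iff_exists_surjective (n : ℕ) :
    (∃ s : Finset M, s.card ≤ n ∧ Submodule.span A (s : Set M) = ⊤) ↔
      ∃ f : (Fin n → A) →ₗ[A] M, Surjective f := by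
  classical
  constructor
  · rintro ⟨s, hcard, hspan⟩
    let v : Fin s.card → M := Subtype.val ∘ s.equivFin.symm
    have hv : Surjective (Fintype.linearCombination A v) := by
      rw [← LinearMap.range_eq_top, Fintype.range_linearCombination, Set.range_comp,
        Equiv.range_eq_univ, Set.image_univ, Subtype.range_coe, hspan]
    have hcast : Surjective (LinearMap.funLeft A A (Fin.castLE hcard)) :=
      LinearMap.funLeft_surjective_of_injective A A _ (Fin.castLE_injective hcard)
    exact ⟨Fintype.linearCombination A v ∘ₗ LinearMap.funLeft A A (Fin.castLE hcard),
      hv.comp hcast⟩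
  · rintro ⟨f, hf⟩
    refine ⟨Finset.univ.image fun i => f (Pi.basisFun A (Fin n) i), ?_, ?_⟩
    · exact Finset.card_image_le.trans (Finset.card_fin n).le
    · rw [Finset.coe_image, Finset.coe_univ, Set.image_univ, Set.range_comp',
        Submodule.span_image, Module.Basis.span_eq, Submodule.map_top,
        LinearMap.range_eq_top.mpr hf]

end Generators

section FreePowers

variable {A : Type*} [Semiring A]

theorem exists_surjective_pi_of_surjective_succ {n : ℕ}
    (g : (Fin n → A) →ₗ[A] (Fin (n + 1) → A)) (hg : Surjective g) :
    ∀ N : ℕ, ∃ f : (Fin n → A) →ₗ[A] (Fin N → A), Surjective f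
  | 0 => ⟨0, fun y => ⟨0, Subsingleton.elim _ _⟩⟩
  | N + 1 => by
    obtain ⟨f, hf⟩ := exists_surjective_pi_of_surjective_succ g hg N
    let consN := Fin.consLinearEquiv A fun _ : Fin (N + 1) => A
    let consn := Fin.consLinearEquiv A fun _ : Fin (n + 1) => A
    refine ⟨consN.toLinearMap ∘ₗ LinearMap.id.prodMap f ∘ₗ consn.symm.toLinearMap ∘ₗ g,
      ?_⟩
    exact consN.surjective.comp <| (surjective_id.prodMap hf).comp <|
      consn.symm.surjective.comp hg

theorem exists_surjective_pi_of_surjective_pi_of_lt {n m : ℕ} (hnm : n < m)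
    (g : (Fin n → A) →ₗ[A] (Fin m → A)) (hg : Surjective g) (N : ℕ) :
    ∃ f : (Fin n → A) →ₗ[A] (Fin N → A), Surjective f :=
  exists_surjective_pi_of_surjective_succ (LinearMap.funLeft A A (Fin.castLE hnm) ∘ₗ g)
    ((LinearMap.funLeft_surjective_of_injective A A _ (Fin.castLE_injective hnm)).comp hg) N

end FreePowers

/-- A ring `R` fails to satisfy the rank condition if and only if there is a positive
integer `n` such that every finitely generated right `R`-module can be generated by
`n` elements.  Right `R`-modules are treated as left `Rᵐᵒᵖ`-modules. -/
theorem statement5 (R : Type u) [Ring R] :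
    ¬ RightRankCondition R ↔
      ∃ n : ℕ, 0 < n ∧
        ∀ (M : Type u) [AddCommGroup M] [Module Rᵐᵒᵖ M], Module.Finite Rᵐᵒᵖ M →
          ∃ s : Finset M, s.card ≤ n ∧ Submodule.span Rᵐᵒᵖ (s : Set M) = ⊤ := by
  constructor
  · intro hR
    simp only [RightRankCondition, not_forall, not_not] at hR
    obtain ⟨n, m, hn, hnm, g, hg⟩ := hR
    refine ⟨n, hn, fun M _ _ _ => ?_⟩
    obtain ⟨k, p, hp⟩ := Module.Finite.exists_fin' Rᵐᵒᵖ M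
    obtain ⟨f, hf⟩ := exists_surjective_pi_of_surjective_pi_of_lt hnm g hg k
    exact (exists_finset_card_le_span_eq_top_iff_exists_surjective n).mpr
      ⟨p ∘ₗ f, hp.comp hf⟩
  · rintro ⟨n, hn, hgen⟩ hR
    have hfree := hgen (Fin (n + 1) → Rᵐᵒᵖ) inferInstance
    exact hR n (n + 1) hn n.lt_succ_self
      ((exists_finset_card_le_span_eq_top_iff_exists_surjective n).mp hfree)
end

section
/- Let R be a ring that fails to satisfy the rank condition. Then the generating number gn(R) equals the smallest positive integer n such that every finitely generated right R-module can be generated by n elements. -/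
universe u

/-- If a ring `R` fails the rank condition, its generating number `gn(R)` is the
smallest positive integer `n` such that there is a surjective homomorphism of right
`R`-modules `R^n → R^(n+1)`. -/
noncomputable def generatingNumber (R : Type u) [Ring R] : ℕ :=
  sInf {n : ℕ | 0 < n ∧
    ∃ f : (Fin n → Rᵐᵒᵖ) →ₗ[Rᵐᵒᵖ] (Fin (n + 1) → Rᵐᵒᵖ), Function.Surjective f}

/-!
A surjection `R^g → R^(g+1)` can be iterated, after adding identity summands, to a surjection
`R^g → R^m` for every `m`. With `g = gn(R)`, every finitely generated module, being a quotient
of some `R^m`, is then a quotient of `R^g`, i.e. is generated by `g` elements. Conversely, if every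
finitely generated module is generated by `n` elements then so is `R^(n+1)`, which gives a
surjection `R^n → R^(n+1)`.
-/

open Function Submodule

section FreeModuleSurjections

variable {A : Type*} [Semiring A]

lemma exists_surjective_fin_pi_of_le {a b : ℕ} (h : b ≤ a) :
    ∃ f : (Fin a → A) →ₗ[A] (Fin b → A), Surjective f :=
  ⟨LinearMap.funLeft A A (Fin.castLE h),
    LinearMap.funLeft_surjective_of_injective A A _ (Fin.castLE_injective h)⟩

lemma exists_surjective_fin_pi_add_right {a b : ℕ}
    {f : (Fin a → A) →ₗ[A] (Fin b → A)} (hf : Surjective f) (k : ℕ) :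
    ∃ F : (Fin (a + k) → A) →ₗ[A] (Fin (b + k) → A), Surjective F := by
  let split (n : ℕ) : (Fin (n + k) → A) ≃ₗ[A] (Fin n → A) × (Fin k → A) :=
    (LinearEquiv.funCongrLeft A A finSumFinEquiv).trans
      (LinearEquiv.sumArrowLequivProdArrow (Fin n) (Fin k) A A)
  refine ⟨(split b).symm.toLinearMap ∘ₗ f.prodMap LinearMap.id ∘ₗ (split a).toLinearMap, ?_⟩
  exact (split b).symm.surjective.comp ((hf.prodMap surjective_id).comp (split a).surjective)

lemma exists_surjective_fin_pi_succ_of_le {g m : ℕ}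
    {f : (Fin g → A) →ₗ[A] (Fin (g + 1) → A)} (hf : Surjective f) (hm : g ≤ m) :
    ∃ F : (Fin m → A) →ₗ[A] (Fin (m + 1) → A), Surjective F := by
  obtain ⟨k, rfl⟩ := Nat.exists_eq_add_of_le hm
  obtain ⟨F, hF⟩ := exists_surjective_fin_pi_add_right hf k
  obtain ⟨e, he⟩ := exists_surjective_fin_pi_of_le (A := A) (Nat.add_right_comm g 1 k).ge
  exact ⟨e ∘ₗ F, he.comp hF⟩

lemma exists_surjective_fin_pi_of_surjective_succ {g : ℕ}
    {f : (Fin g → A) →ₗ[A] (Fin (g + 1) → A)} (hf : Surjective f) (m : ℕ) :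
    ∃ F : (Fin g → A) →ₗ[A] (Fin m → A), Surjective F := by
  rcases le_total m g with hmg | hgm
  · exact exists_surjective_fin_pi_of_le hmg
  induction m, hgm using Nat.le_induction with
  | base => exact ⟨LinearMap.id, surjective_id⟩
  | succ m hgm ih =>
    obtain ⟨F, hF⟩ := ih
    obtain ⟨G, hG⟩ := exists_surjective_fin_pi_succ_of_le hf hgm
    exact ⟨G ∘ₗ F, hG.comp hF⟩

variable {M : Type*} [AddCommMonoid M] [Module A M]

lemma exists_surjective_of_finite_of_surjective_succ [Module.Finite A M] {g : ℕ}
    {f : (Fin g → A) →ₗ[A] (Fin (g + 1) → A)} (hf : Surjective f) :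
    ∃ F : (Fin g → A) →ₗ[A] M, Surjective F := by
  obtain ⟨m, p, hp⟩ := Module.Finite.exists_fin' A M
  obtain ⟨F, hF⟩ := exists_surjective_fin_pi_of_surjective_succ hf m
  exact ⟨p ∘ₗ F, hp.comp hF⟩

lemma exists_finset_card_le_span_eq_top_iff {n : ℕ} :
    (∃ s : Finset M, s.card ≤ n ∧ span A (s : Set M) = ⊤) ↔
      ∃ f : (Fin n → A) →ₗ[A] M, Surjective f := by
  classical
  constructor
  · rintro ⟨s, hcard, hspan⟩
    have hcomb : Surjective (Fintype.linearCombination A ((↑) : s → M)) := by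
      rw [← span_range_eq_top_iff_surjective_fintypeLinearCombination, Subtype.range_coe, hspan]
    have hinj : Injective (Fin.castLE hcard ∘ s.equivFin) :=
      (Fin.castLE_injective hcard).comp s.equivFin.injective
    exact ⟨Fintype.linearCombination A _ ∘ₗ LinearMap.funLeft A A _,
      hcomb.comp (LinearMap.funLeft_surjective_of_injective A A _ hinj)⟩
  · rintro ⟨f, hf⟩
    refine ⟨Finset.univ.image fun i => f (Pi.single i 1), Finset.card_image_le.trans (by simp), ?_⟩
    have hf_eq : f = Fintype.linearCombination A fun i => f (Pi.single i 1) :=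
      LinearMap.pi_ext fun i x => by
        rw [Fintype.linearCombination_apply_single, ← map_smul, ← Pi.single_smul', smul_eq_mul,
          mul_one]
    rw [Finset.coe_image, Finset.coe_univ, Set.image_univ,
      span_range_eq_top_iff_surjective_fintypeLinearCombination, ← hf_eq]
    exact hf

end FreeModuleSurjections

lemma generatingNumber_spec {R : Type u} [Ring R] (hR : ¬ RightRankCondition R) :
    0 < generatingNumber R ∧ ∃ f : (Fin (generatingNumber R) → Rᵐᵒᵖ) →ₗ[Rᵐᵒᵖ]
      (Fin (generatingNumber R + 1) → Rᵐᵒᵖ), Surjective f := by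
  simp only [RightRankCondition, not_forall, not_not] at hR
  obtain ⟨n, m, hn, hnm, f, hf⟩ := hR
  obtain ⟨p, hp⟩ := exists_surjective_fin_pi_of_le (A := Rᵐᵒᵖ) hnm
  exact Nat.sInf_mem (s := {n | 0 < n ∧ ∃ f : (Fin n → Rᵐᵒᵖ) →ₗ[Rᵐᵒᵖ] (Fin (n + 1) → Rᵐᵒᵖ),
    Surjective f}) ⟨n, hn, p ∘ₗ f, hp.comp hf⟩

/-- Let `R` be a ring that fails to satisfy the rank condition.  Then the generating
number `gn(R)` equals the smallest positive integer `n` such that every finitely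
generated right `R`-module can be generated by `n` elements. -/
theorem statement7 (R : Type u) [Ring R] (hR : ¬ RightRankCondition R) :
    generatingNumber R =
      sInf {n : ℕ | 0 < n ∧
        ∀ (M : Type u) [AddCommGroup M] [Module Rᵐᵒᵖ M], Module.Finite Rᵐᵒᵖ M →
          ∃ s : Finset M, s.card ≤ n ∧ Submodule.span Rᵐᵒᵖ (s : Set M) = ⊤} := by
  obtain ⟨hpos, f, hf⟩ := generatingNumber_spec hR
  have hmem : generatingNumber R ∈ {n : ℕ | 0 < n ∧
      ∀ (M : Type u) [AddCommGroup M] [Module Rᵐᵒᵖ M], Module.Finite Rᵐᵒᵖ M →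
        ∃ s : Finset M, s.card ≤ n ∧ Submodule.span Rᵐᵒᵖ (s : Set M) = ⊤} :=
    ⟨hpos, fun M _ _ _ => exists_finset_card_le_span_eq_top_iff.mpr
      (exists_surjective_of_finite_of_surjective_succ hf)⟩
  refine le_antisymm (le_csInf ⟨_, hmem⟩ fun n ⟨hn, hgen⟩ => ?_) (Nat.sInf_le hmem)
  exact Nat.sInf_le
    ⟨hn, exists_finset_card_le_span_eq_top_iff.mp (hgen (Fin (n + 1) → Rᵐᵒᵖ) inferInstance)⟩
end

section
/- A ring R satisfies the strong rank condition if and only if, for every progenerator P of the category of right R-modules and all positive integers m and n, the existence of an injective homomorphism of right R-modules P^n → P^m implies n ≤ m. -/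
/-!
If `P^n` embeds in `P^m` with `m < n`, then `P^(m+1)` embeds in `P^m`, and peeling off one
copy of `P` at a time shows that every finite power of `P` embeds in `P^m`. Since `R` is a
direct summand of `P^l` and `P` a direct summand of `R^k`, this embeds `R^(km+2)` in
`R^(km+1)`, contradicting the strong rank condition. Conversely, `R` is itself a progenerator.
-/

universe u

/-- A ring `R` satisfies the (right) strong rank condition if for all positive integers
`m < n` there is no injective homomorphism of right `R`-modules `R^n → R^m`.
Right `R`-modules are treated as left modules over the opposite ring `Rᵐᵒᵖ`. -/
def RightStrongRankCondition (R : Type u) [Ring R] : Prop :=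
  ∀ m n : ℕ, 0 < m → m < n →
    ¬ ∃ f : (Fin n → Rᵐᵒᵖ) →ₗ[Rᵐᵒᵖ] (Fin m → Rᵐᵒᵖ), Function.Injective f

/-- A progenerator of the category of right `R`-modules (treated as left `Rᵐᵒᵖ`-modules)
is a finitely generated projective right `R`-module `P` such that the right `R`-module
`R` (i.e. `Rᵐᵒᵖ` as a left `Rᵐᵒᵖ`-module) is isomorphic to a direct summand of `P^l`
for some positive integer `l`. -/
def IsProgenerator (R : Type u) [Ring R] (P : Type u) [AddCommGroup P]
    [Module Rᵐᵒᵖ P] : Prop :=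
  Module.Finite Rᵐᵒᵖ P ∧ Module.Projective Rᵐᵒᵖ P ∧
    ∃ l : ℕ, 0 < l ∧
      ∃ (f : Rᵐᵒᵖ →ₗ[Rᵐᵒᵖ] (Fin l → P)) (g : (Fin l → P) →ₗ[Rᵐᵒᵖ] Rᵐᵒᵖ),
        g.comp f = LinearMap.id

open Function

def LinearEmbeds (S : Type*) [Semiring S] (M N : Type*) [AddCommMonoid M] [Module S M]
    [AddCommMonoid N] [Module S N] : Prop :=
  ∃ f : M →ₗ[S] N, Injective f

namespace LinearEmbeds

variable {S : Type*} [Semiring S] {M N K : Type*} [AddCommMonoid M] [Module S M]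
  [AddCommMonoid N] [Module S N] [AddCommMonoid K] [Module S K]

theorem trans (h₁ : LinearEmbeds S M N) (h₂ : LinearEmbeds S N K) : LinearEmbeds S M K := by
  obtain ⟨f, hf⟩ := h₁
  obtain ⟨g, hg⟩ := h₂
  exact ⟨g ∘ₗ f, hg.comp hf⟩

theorem of_linearEquiv (e : M ≃ₗ[S] N) : LinearEmbeds S M N := ⟨e, e.injective⟩

theorem prodMap_id (h : LinearEmbeds S M N) : LinearEmbeds S (M × K) (N × K) := by
  obtain ⟨f, hf⟩ := h
  exact ⟨f.prodMap LinearMap.id, hf.prodMap injective_id⟩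

theorem pi (h : LinearEmbeds S M N) (ι : Type*) : LinearEmbeds S (ι → M) (ι → N) := by
  obtain ⟨f, hf⟩ := h
  exact ⟨f.compLeft ι, fun x y hxy => funext fun i => hf (congrFun hxy i)⟩

end LinearEmbeds

section FinPowers

variable (S : Type*) [Semiring S] (M : Type*) [AddCommMonoid M] [Module S M]

def finPiAddEquiv (a b : ℕ) : (Fin (a + b) → M) ≃ₗ[S] (Fin a → M) × (Fin b → M) :=
  (LinearEquiv.funCongrLeft S M finSumFinEquiv).trans
    (LinearEquiv.sumArrowLequivProdArrow (Fin a) (Fin b) S M)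

def finPiMulEquiv (a b : ℕ) : (Fin a → Fin b → M) ≃ₗ[S] (Fin (a * b) → M) :=
  (LinearEquiv.curry S M (Fin a) (Fin b)).symm.trans
    (LinearEquiv.funCongrLeft S M finProdFinEquiv.symm)

variable {S M}

theorem linearEmbeds_fin_pi_of_le {a b : ℕ} (hab : a ≤ b) :
    LinearEmbeds S (Fin a → M) (Fin b → M) := by
  obtain ⟨c, rfl⟩ := Nat.exists_eq_add_of_le hab
  exact LinearEmbeds.trans ⟨LinearMap.inl S _ _, LinearMap.inl_injective⟩
    (.of_linearEquiv (finPiAddEquiv S M a c).symm)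

theorem LinearEmbeds.fin_pi_mul {N : Type*} [AddCommMonoid N] [Module S N] {l : ℕ}
    (h : LinearEmbeds S M (Fin l → N)) (a : ℕ) :
    LinearEmbeds S (Fin a → M) (Fin (a * l) → N) :=
  (h.pi (Fin a)).trans (.of_linearEquiv (finPiMulEquiv S N a l))

theorem LinearEmbeds.fin_pi_add_of_succ {m : ℕ}
    (h : LinearEmbeds S (Fin (m + 1) → M) (Fin m → M)) (j : ℕ) :
    LinearEmbeds S (Fin (m + j) → M) (Fin m → M) := by
  induction j with
  | zero => exact linearEmbeds_fin_pi_of_le le_rfl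
  | succ j ih =>
    rw [← add_assoc, add_right_comm]
    exact (LinearEmbeds.of_linearEquiv (finPiAddEquiv S M (m + 1) j)).trans <|
      h.prodMap_id.trans <| (LinearEmbeds.of_linearEquiv (finPiAddEquiv S M m j).symm).trans ih

theorem LinearEmbeds.fin_pi_of_lt {m n : ℕ} (hmn : m < n)
    (h : LinearEmbeds S (Fin n → M) (Fin m → M)) (N : ℕ) :
    LinearEmbeds S (Fin N → M) (Fin m → M) := by
  have hsucc : LinearEmbeds S (Fin (m + 1) → M) (Fin m → M) :=
    (linearEmbeds_fin_pi_of_le hmn).trans h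
  exact (linearEmbeds_fin_pi_of_le (Nat.le_add_left N m)).trans (hsucc.fin_pi_add_of_succ N)

end FinPowers

theorem isProgenerator_self (R : Type u) [Ring R] : IsProgenerator R Rᵐᵒᵖ :=
  ⟨inferInstance, inferInstance, 1, one_pos,
    LinearMap.pi fun _ => LinearMap.id, LinearMap.proj 0, rfl⟩

/-- A ring `R` satisfies the strong rank condition if and only if, for every progenerator
`P` of the category of right `R`-modules and all positive integers `m` and `n`, the
existence of an injective homomorphism of right `R`-modules `P^n → P^m` implies
`n ≤ m`. -/
theorem statement11 (R : Type u) [Ring R] :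
    RightStrongRankCondition R ↔
      ∀ (P : Type u) [AddCommGroup P] [Module Rᵐᵒᵖ P], IsProgenerator R P →
        ∀ m n : ℕ, 0 < m → 0 < n →
          (∃ f : (Fin n → P) →ₗ[Rᵐᵒᵖ] (Fin m → P), Function.Injective f) → n ≤ m := by
  constructor
  · intro hsrc P _ _ hP m n _ _ hPnm
    by_contra! hmn
    obtain ⟨_, _, l, _, i, g, hgi⟩ := hP
    obtain ⟨k, _, j, _, hj, _⟩ := Module.Finite.exists_comp_eq_id_of_projective Rᵐᵒᵖ P
    have hRP : LinearEmbeds Rᵐᵒᵖ Rᵐᵒᵖ (Fin l → P) :=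
      ⟨i, LinearMap.injective_of_comp_eq_id i g hgi⟩
    have hPR : LinearEmbeds Rᵐᵒᵖ P (Fin k → Rᵐᵒᵖ) := ⟨j, hj⟩
    have hPm : ∀ N, LinearEmbeds Rᵐᵒᵖ (Fin N → P) (Fin m → P) :=
      LinearEmbeds.fin_pi_of_lt hmn hPnm
    exact hsrc (m * k + 1) (m * k + 2) (Nat.succ_pos _) (Nat.lt_succ_self _) <|
      ((hRP.fin_pi_mul _).trans (hPm _)).trans <|
        (hPR.fin_pi_mul m).trans (linearEmbeds_fin_pi_of_le (Nat.le_succ _))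
  · intro h m n hm hmn hRnm
    exact (h Rᵐᵒᵖ (isProgenerator_self R) m n hm (hm.trans hmn) hRnm).not_gt hmn
end
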